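/- Let a > 0 and δ > 0 satisfy aδ < π/2. Then every complex number λ satisfying the characteristic equation λ e^{λδ} + a = 0 has strictly negative real part: Re λ < 0. -/
import Mathlib


/-- Sufficiency part of Theorem 2 of the paper: if `a > 0`, `δ > 0` and
`a δ < π/2`, then every root `λ ∈ ℂ` of the characteristic equation
`λ e^{λδ} + a = 0` of the linearized delayed replicator dynamics
`ẋ t = −a x (t − δ)` has strictly negative real part. -/
theorem delayed_replicator_char_roots_stable (a δ : ℝ)
    (ha : 0 < a) (hδ : 0 < δ) (h : a * δ < Real.pi / 2) :
    ∀ lam : ℂ, lam * Complex.exp (lam * (δ : ℂ)) + (a : ℂ) = 0 → lam.re < 0 := by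
  intro lam heq
  by_contra h0
  push_neg at h0
  have key : lam = -(a:ℂ) * Complex.exp (-(lam * (δ:ℂ))) := by
    have h1 : lam * Complex.exp (lam * (δ:ℂ)) = -(a:ℂ) := by linear_combination heq
    calc lam = lam * Complex.exp (lam * (δ:ℂ)) * Complex.exp (-(lam * (δ:ℂ))) := by
          rw [mul_assoc, ← Complex.exp_add, add_neg_cancel, Complex.exp_zero, mul_one]
      _ = -(a:ℂ) * Complex.exp (-(lam * (δ:ℂ))) := by rw [h1]
  have hz_re : (-(lam * (δ:ℂ))).re = -(lam.re * δ) := by simp [Complex.mul_re]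
  have hz_im : (-(lam * (δ:ℂ))).im = -(lam.im * δ) := by simp [Complex.mul_im]
  have hEpos : 0 < Real.exp (-(lam.re * δ)) := Real.exp_pos _
  have hE1 : Real.exp (-(lam.re * δ)) ≤ 1 := by
    apply Real.exp_le_one_iff.mpr
    nlinarith
  have hre : lam.re = -(a * (Real.exp (-(lam.re * δ)) * Real.cos (lam.im * δ))) := by
    have := congrArg Complex.re key
    rw [Complex.mul_re] at this
    simpa [Complex.exp_re, Complex.exp_im, hz_re, hz_im] using this
  have him : lam.im = a * (Real.exp (-(lam.re * δ)) * Real.sin (lam.im * δ)) := by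
    have := congrArg Complex.im key
    rw [Complex.mul_im] at this
    simpa [Complex.exp_re, Complex.exp_im, hz_re, hz_im] using this
  have hs := Real.abs_sin_le_one (lam.im * δ)
  have hsn := abs_nonneg (Real.sin (lam.im * δ))
  have hyabs : |lam.im| ≤ a := by
    have habs : |lam.im| = a * (Real.exp (-(lam.re * δ)) * |Real.sin (lam.im * δ)|) := by
      conv_lhs => rw [him]
      rw [abs_mul, abs_mul, abs_of_pos ha, abs_of_pos hEpos]
    have h1 : Real.exp (-(lam.re * δ)) * |Real.sin (lam.im * δ)| ≤ 1 := by
      nlinarith [mul_le_mul_of_nonneg_left hs hEpos.le]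
    nlinarith [habs, h1]
  have habsd : |lam.im * δ| < Real.pi / 2 := by
    rw [abs_mul, abs_of_pos hδ]
    nlinarith
  have hcos : 0 < Real.cos (lam.im * δ) := by
    apply Real.cos_pos_of_mem_Ioo
    constructor
    · linarith [neg_abs_le (lam.im * δ)]
    · linarith [le_abs_self (lam.im * δ)]
  nlinarith [mul_pos (mul_pos ha hEpos) hcos]
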